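/- With notation as above (v ≥ 2, A = Id + J, B = −(Id + J), M = (2/(v-1))(Id+J)), the sum over pairs of 4-tuples differing in exactly the first three coordinates (i₄ = j₄) of (F(i)−F(j))(F(i)−F(j))ᵀ equals 2(v-1)³ A^{⊗4} − 2 B^{⊗3} ⊗ A = (1/8)v(v-1)⁴(v²−3v+3) M^{⊗4}. -/

import Mathlib

open Kronecker

/-- Effects-type coding of a `v`-level factor. -/
def eff (v : ℕ) (i : Fin v) : Fin (v - 1) → ℝ :=
  fun j => if (i : ℕ) = v - 1 then -1 else if (i : ℕ) = (j : ℕ) then 1 else 0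

/-- All-ones matrix. -/
def Jmat (v : ℕ) : Matrix (Fin (v - 1)) (Fin (v - 1)) ℝ := Matrix.of fun _ _ => 1

/-- `A = Id + J = ∑ᵢ f(i)f(i)ᵀ`. -/
noncomputable def Amat (v : ℕ) : Matrix (Fin (v - 1)) (Fin (v - 1)) ℝ := 1 + Jmat v

/-- `B = -(Id + J) = ∑_{i≠j} f(i)f(j)ᵀ`. -/
noncomputable def Bmat (v : ℕ) : Matrix (Fin (v - 1)) (Fin (v - 1)) ℝ := -(1 + Jmat v)

/-- One-way layout information matrix `M = (2/(v-1))(Id + J)`. -/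
noncomputable def Mmat (v : ℕ) : Matrix (Fin (v - 1)) (Fin (v - 1)) ℝ :=
  (2 / ((v : ℝ) - 1)) • ((1 : Matrix (Fin (v - 1)) (Fin (v - 1)) ℝ) + Jmat v)

/-- `F(i) = f(i₁) ⊗ f(i₂) ⊗ f(i₃) ⊗ f(i₄)` (Kronecker product of vectors). -/
def Fvec (v : ℕ) (i : Fin v × Fin v × Fin v × Fin v) :
    ((Fin (v - 1) × Fin (v - 1)) × Fin (v - 1)) × Fin (v - 1) → ℝ :=
  fun p => eff v i.1 p.1.1.1 * eff v i.2.1 p.1.1.2 * eff v i.2.2.1 p.1.2 * eff v i.2.2.2 p.2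

/-!
Expanding `(F(i) - F(j))(F(i) - F(j))ᵀ` and using that the set of index pairs is symmetric,
the sum is `2 ∑ F(i)F(i)ᵀ - 2 ∑ F(i)F(j)ᵀ`. Since `F(i)F(j)ᵀ = ⊗ₖ f(iₖ)f(jₖ)ᵀ` and the index
condition is a conjunction of conditions on single coordinates, each sum is a Kronecker product
of one-coordinate sums. These are `∑_{a ≠ b} f(a)f(a)ᵀ = (v - 1) A`,
`∑_{a ≠ b} f(a)f(b)ᵀ = (∑ f)(∑ f)ᵀ - A = B` (the effects coding sums to zero) and
`∑_a f(a)f(a)ᵀ = A`. The second equality follows from `B = -A`, `M = (2 / (v - 1)) A` and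
`(v - 1)³ + 1 = v (v² - 3v + 3)`.
-/

open Matrix

section KroneckerSums

variable {R : Type*} [CommSemiring R]
  {α α' β β' γ γ' δ δ' : Type*} [Fintype α] [Fintype α'] [Fintype β] [Fintype β']
  [Fintype γ] [Fintype γ'] [Fintype δ] [Fintype δ']
  {l₁ l₂ l₃ l₄ m₁ m₂ m₃ m₄ : Type*}

theorem Fintype.sum_sum_prod_type_mul (f : α → α' → R) (g : β → β' → R) :
    ∑ i : α × β, ∑ j : α' × β', f i.1 j.1 * g i.2 j.2
      = (∑ a, ∑ a', f a a') * ∑ b, ∑ b', g b b' := by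
  simp only [Fintype.sum_prod_type, Finset.sum_mul_sum]

theorem Matrix.sum_sum_kronecker₄ (g₁ : α → α' → Matrix l₁ m₁ R) (g₂ : β → β' → Matrix l₂ m₂ R)
    (g₃ : γ → γ' → Matrix l₃ m₃ R) (g₄ : δ → δ' → Matrix l₄ m₄ R) :
    ∑ i : α × β × γ × δ, ∑ j : α' × β' × γ' × δ',
        g₁ i.1 j.1 ⊗ₖ g₂ i.2.1 j.2.1 ⊗ₖ g₃ i.2.2.1 j.2.2.1 ⊗ₖ g₄ i.2.2.2 j.2.2.2
      = (∑ a, ∑ a', g₁ a a') ⊗ₖ (∑ b, ∑ b', g₂ b b') ⊗ₖ (∑ c, ∑ c', g₃ c c')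
          ⊗ₖ (∑ d, ∑ d', g₄ d d') := by
  ext ⟨⟨⟨p₁, p₂⟩, p₃⟩, p₄⟩ ⟨⟨⟨q₁, q₂⟩, q₃⟩, q₄⟩
  simp only [Matrix.sum_apply, kronecker_apply, mul_assoc]
  rw [Fintype.sum_sum_prod_type_mul (fun a a' => g₁ a a' p₁ q₁)
      (fun (b : β × γ × δ) (b' : β' × γ' × δ') =>
        g₂ b.1 b'.1 p₂ q₂ * (g₃ b.2.1 b'.2.1 p₃ q₃ * g₄ b.2.2 b'.2.2 p₄ q₄)),
    Fintype.sum_sum_prod_type_mul (fun b b' => g₂ b b' p₂ q₂)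
      (fun (c : γ × δ) (c' : γ' × δ') => g₃ c.1 c'.1 p₃ q₃ * g₄ c.2 c'.2 p₄ q₄),
    Fintype.sum_sum_prod_type_mul (fun c c' => g₃ c c' p₃ q₃) (fun d d' => g₄ d d' p₄ q₄)]

theorem Matrix.ite_and_kronecker (P Q : Prop) [Decidable P] [Decidable Q]
    (A : Matrix l₁ m₁ R) (B : Matrix l₂ m₂ R) :
    (if P ∧ Q then A ⊗ₖ B else 0) = (if P then A else 0) ⊗ₖ (if Q then B else 0) := by
  by_cases hP : P <;> by_cases hQ : Q <;> simp [hP, hQ]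

end KroneckerSums

section PairSums

variable {R : Type*} [CommRing R] {ι m n : Type*} [Fintype ι]

theorem Fintype.sum_sum_ite_ne [DecidableEq ι] {M : Type*} [AddCommGroup M] (h : ι → ι → M) :
    ∑ a, ∑ b, (if a ≠ b then h a b else 0) = ∑ a, ∑ b, h a b - ∑ a, h a a := by
  have hsub : ∀ a b, (if a ≠ b then h a b else 0) = h a b - if a = b then h a b else 0 := by
    intro a b; split_ifs <;> simp_all
  simp [hsub, Finset.sum_sub_distrib]

theorem Fintype.sum_sum_ite_swap {M : Type*} [AddCommMonoid M] {r : ι → ι → Prop} [DecidableRel r]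
    (hr : ∀ i j, r i j → r j i) (g : ι → ι → M) :
    ∑ i, ∑ j, (if r i j then g j i else 0) = ∑ i, ∑ j, (if r i j then g i j else 0) := by
  rw [Finset.sum_comm]
  exact Finset.sum_congr rfl fun i _ => Finset.sum_congr rfl fun j _ =>
    if_congr ⟨hr j i, hr i j⟩ rfl rfl

theorem Matrix.vecMulVec_sum_sum (f : ι → m → R) (g : ι → n → R) :
    vecMulVec (∑ a, f a) (∑ b, g b) = ∑ a, ∑ b, vecMulVec (f a) (g b) := by
  ext p q
  simp [vecMulVec_apply, Matrix.sum_apply, Finset.sum_mul_sum]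

theorem Matrix.sum_sum_ite_vecMulVec_sub {r : ι → ι → Prop} [DecidableRel r]
    (hr : ∀ i j, r i j → r j i) (F : ι → n → R) :
    ∑ i, ∑ j, (if r i j then vecMulVec (F i - F j) (F i - F j) else 0)
      = (2 : R) • ∑ i, ∑ j, (if r i j then vecMulVec (F i) (F i) else 0)
        - (2 : R) • ∑ i, ∑ j, (if r i j then vecMulVec (F i) (F j) else 0) := by
  have hsplit : ∀ i j, (if r i j then vecMulVec (F i - F j) (F i - F j) else 0)
      = (if r i j then vecMulVec (F i) (F i) else 0) + (if r i j then vecMulVec (F j) (F j) else 0)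
        - (if r i j then vecMulVec (F i) (F j) else 0)
        - (if r i j then vecMulVec (F j) (F i) else 0) := by
    intro i j
    split_ifs
    · simp only [vecMulVec_sub, sub_vecMulVec]; abel
    · simp
  simp only [hsplit, Finset.sum_add_distrib, Finset.sum_sub_distrib,
    Fintype.sum_sum_ite_swap hr (fun a _ => vecMulVec (F a) (F a)),
    Fintype.sum_sum_ite_swap hr (fun a b => vecMulVec (F a) (F b))]
  module

theorem Matrix.sum_sum_ite_ne_vecMulVec_self [DecidableEq ι] (f : ι → n → R) :
    ∑ a, ∑ b, (if a ≠ b then vecMulVec (f a) (f a) else 0)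
      = ((Fintype.card ι : R) - 1) • ∑ a, vecMulVec (f a) (f a) := by
  rw [Fintype.sum_sum_ite_ne]
  simp [sub_smul, Finset.smul_sum, Nat.cast_smul_eq_nsmul]

theorem Matrix.sum_sum_ite_ne_vecMulVec [DecidableEq ι] (f : ι → n → R) :
    ∑ a, ∑ b, (if a ≠ b then vecMulVec (f a) (f b) else 0)
      = vecMulVec (∑ a, f a) (∑ a, f a) - ∑ a, vecMulVec (f a) (f a) := by
  rw [Fintype.sum_sum_ite_ne, vecMulVec_sum_sum]

end PairSums

section EffectsCoding

theorem eff_castSucc (k : ℕ) (i : Fin k) : eff (k + 1) i.castSucc = Pi.single i 1 := by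
  ext a
  simp [eff, Pi.single_apply, Fin.ext_iff, i.isLt.ne, eq_comm]

theorem eff_last (k : ℕ) : eff (k + 1) (Fin.last k) = fun _ => -1 := by
  ext a
  simp [eff]

variable (v : ℕ)

theorem sum_eff : ∑ i, eff v i = 0 := by
  cases v with
  | zero => ext a; exact a.elim0
  | succ k =>
    rw [Fin.sum_univ_castSucc]
    simp only [eff_castSucc, eff_last, Finset.univ_sum_single]
    ext a
    simp

theorem sum_vecMulVec_eff : ∑ i, vecMulVec (eff v i) (eff v i) = Amat v := by
  cases v with
  | zero => ext a; exact a.elim0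
  | succ k =>
    rw [Fin.sum_univ_castSucc]
    simp only [eff_castSucc, eff_last]
    ext a b
    simp [vecMulVec_apply, Matrix.sum_apply, Pi.single_apply, Amat, Jmat, one_apply]

theorem Bmat_eq_neg_Amat : Bmat v = -Amat v := rfl

theorem Mmat_eq_smul_Amat : Mmat v = (2 / ((v : ℝ) - 1)) • Amat v := rfl

theorem vecMulVec_Fvec (i j : Fin v × Fin v × Fin v × Fin v) :
    vecMulVec (Fvec v i) (Fvec v j)
      = vecMulVec (eff v i.1) (eff v j.1) ⊗ₖ vecMulVec (eff v i.2.1) (eff v j.2.1)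
        ⊗ₖ vecMulVec (eff v i.2.2.1) (eff v j.2.2.1)
        ⊗ₖ vecMulVec (eff v i.2.2.2) (eff v j.2.2.2) := by
  ext ⟨⟨⟨p₁, p₂⟩, p₃⟩, p₄⟩ ⟨⟨⟨q₁, q₂⟩, q₃⟩, q₄⟩
  simp only [vecMulVec_apply, kronecker_apply, Fvec]
  ring

end EffectsCoding

abbrev DiffersExactlyInFirstThree {α : Type*} (i j : α × α × α × α) : Prop :=
  i.1 ≠ j.1 ∧ i.2.1 ≠ j.2.1 ∧ i.2.2.1 ≠ j.2.2.1 ∧ i.2.2.2 = j.2.2.2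

theorem DiffersExactlyInFirstThree.symm {α : Type*} {i j : α × α × α × α}
    (h : DiffersExactlyInFirstThree i j) : DiffersExactlyInFirstThree j i :=
  ⟨h.1.symm, h.2.1.symm, h.2.2.1.symm, h.2.2.2.symm⟩

theorem sum_sum_ite_differsExactlyInFirstThree_kronecker {R α m n : Type*} [CommRing R]
    [Fintype α] [DecidableEq α] (g : α → α → Matrix m n R) :
    ∑ i : α × α × α × α, ∑ j : α × α × α × α, (if DiffersExactlyInFirstThree i j then
        g i.1 j.1 ⊗ₖ g i.2.1 j.2.1 ⊗ₖ g i.2.2.1 j.2.2.1 ⊗ₖ g i.2.2.2 j.2.2.2 else 0)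
      = (∑ a, ∑ b, if a ≠ b then g a b else 0) ⊗ₖ (∑ a, ∑ b, if a ≠ b then g a b else 0)
          ⊗ₖ (∑ a, ∑ b, if a ≠ b then g a b else 0) ⊗ₖ ∑ a, g a a := by
  simp only [DiffersExactlyInFirstThree, ← and_assoc, ite_and_kronecker]
  rw [sum_sum_kronecker₄ (fun a b => if a ≠ b then g a b else 0)
    (fun a b => if a ≠ b then g a b else 0) (fun a b => if a ≠ b then g a b else 0)
    (fun a b => if a = b then g a b else 0)]
  simp [Finset.sum_ite_eq]

theorem sum_sum_ite_vecMulVec_Fvec_self (v : ℕ) :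
    ∑ i, ∑ j, (if DiffersExactlyInFirstThree i j then vecMulVec (Fvec v i) (Fvec v i) else 0)
      = ((v : ℝ) - 1) ^ 3 • (Amat v ⊗ₖ Amat v ⊗ₖ Amat v ⊗ₖ Amat v) := by
  simp only [vecMulVec_Fvec]
  rw [sum_sum_ite_differsExactlyInFirstThree_kronecker (fun a _ => vecMulVec (eff v a) (eff v a)),
    sum_sum_ite_ne_vecMulVec_self, sum_vecMulVec_eff, Fintype.card_fin]
  simp only [smul_kronecker, kronecker_smul, smul_smul]
  ring_nf

theorem sum_sum_ite_vecMulVec_Fvec (v : ℕ) :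
    ∑ i, ∑ j, (if DiffersExactlyInFirstThree i j then vecMulVec (Fvec v i) (Fvec v j) else 0)
      = Bmat v ⊗ₖ Bmat v ⊗ₖ Bmat v ⊗ₖ Amat v := by
  simp only [vecMulVec_Fvec]
  rw [sum_sum_ite_differsExactlyInFirstThree_kronecker (fun a b => vecMulVec (eff v a) (eff v b)),
    sum_sum_ite_ne_vecMulVec, sum_eff, sum_vecMulVec_eff, Bmat_eq_neg_Amat]
  simp

theorem stmt_6 (v : ℕ) (hv : 2 ≤ v) :
    (∑ i : Fin v × Fin v × Fin v × Fin v, ∑ j : Fin v × Fin v × Fin v × Fin v,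
        if i.1 ≠ j.1 ∧ i.2.1 ≠ j.2.1 ∧ i.2.2.1 ≠ j.2.2.1 ∧ i.2.2.2 = j.2.2.2 then
          Matrix.vecMulVec (Fvec v i - Fvec v j) (Fvec v i - Fvec v j) else 0)
      = (2 * ((v : ℝ) - 1) ^ 3) • (Amat v ⊗ₖ Amat v ⊗ₖ Amat v ⊗ₖ Amat v)
        - (2 : ℝ) • (Bmat v ⊗ₖ Bmat v ⊗ₖ Bmat v ⊗ₖ Amat v) ∧
    (2 * ((v : ℝ) - 1) ^ 3) • (Amat v ⊗ₖ Amat v ⊗ₖ Amat v ⊗ₖ Amat v)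
        - (2 : ℝ) • (Bmat v ⊗ₖ Bmat v ⊗ₖ Bmat v ⊗ₖ Amat v)
      = ((1 / 8) * (v : ℝ) * ((v : ℝ) - 1) ^ 4
            * ((v : ℝ) ^ 2 - 3 * (v : ℝ) + 3)) •
          (Mmat v ⊗ₖ Mmat v ⊗ₖ Mmat v ⊗ₖ Mmat v) := by
  constructor
  · rw [sum_sum_ite_vecMulVec_sub (fun _ _ => DiffersExactlyInFirstThree.symm),
      sum_sum_ite_vecMulVec_Fvec_self, sum_sum_ite_vecMulVec_Fvec, smul_smul]
  · have hv₁ : (v : ℝ) - 1 ≠ 0 := by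
      have : (2 : ℝ) ≤ v := by exact_mod_cast hv
      linarith
    rw [Bmat_eq_neg_Amat, Mmat_eq_smul_Amat, ← neg_one_smul ℝ (Amat v)]
    simp only [smul_kronecker, kronecker_smul, smul_smul, ← sub_smul]
    congr 1
    field_simp
    ring
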